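/- arXiv:1809.00795 — 2 statements merged into one kernel-verified Lean document; each statement's English description precedes it below -/
import Mathlib

section
/- Let S be a continuous Hermitian-matrix-valued solution of S' = S² - V on (x₋, x₊) with V bounded Hermitian-valued, and suppose S blows up as x → x₊⁻. Then an eigenvalue λ of S satisfies λ(x) ~ -1/(x - x₊) → +∞ as x → x₊⁻; more precisely, any eigenvalue λ with unit eigenvector e obeys λ' = λ² - e†Ve, so a divergent eigenvalue diverges to +∞ at a left-approach to a finite point. -/
open Matrix Filter Topology Set

/-!
Differentiating `λ = e† S e` and using that `S` is Hermitian, the two terms containing `e'` add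
up to `λ (e† e)' = 0`, so `λ' = e† S' e = λ² - e† V e`. Since `e† V e` is bounded, `λ' > 0`
wherever `|λ|` is large. Near `x₊` the eigenvalue does not vanish, hence has a constant sign;
a negative branch would be increasing and could not tend to `-∞`.
-/

section Derivatives

variable {𝕜 𝔸 m n : Type*} [NontriviallyNormedField 𝕜] [NormedCommRing 𝔸] [NormedAlgebra 𝕜 𝔸]
  [Fintype n] {x : 𝕜}

theorem hasDerivAt_dotProduct {u v : 𝕜 → n → 𝔸} {u' v' : n → 𝔸}
    (hu : ∀ i, HasDerivAt (fun t => u t i) (u' i) x)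
    (hv : ∀ i, HasDerivAt (fun t => v t i) (v' i) x) :
    HasDerivAt (fun t => u t ⬝ᵥ v t) (u' ⬝ᵥ v x + u x ⬝ᵥ v') x := by
  simpa only [dotProduct, Finset.sum_add_distrib] using
    HasDerivAt.fun_sum fun i _ => (hu i).fun_mul (hv i)

theorem hasDerivAt_mulVec_apply {A : 𝕜 → Matrix m n 𝔸} {A' : Matrix m n 𝔸} {v : 𝕜 → n → 𝔸}
    {v' : n → 𝔸} (hA : ∀ i j, HasDerivAt (fun t => A t i j) (A' i j) x)
    (hv : ∀ j, HasDerivAt (fun t => v t j) (v' j) x) (i : m) :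
    HasDerivAt (fun t => (A t *ᵥ v t) i) ((A' *ᵥ v x + A x *ᵥ v') i) x :=
  hasDerivAt_dotProduct (hA i) hv

end Derivatives

section Eigen

variable {𝕜 m n : Type*} [RCLike 𝕜] [Fintype m] [Fintype n]

theorem norm_apply_le_one_of_star_dotProduct_self_eq_one {e : m → 𝕜} (he : star e ⬝ᵥ e = 1)
    (i : m) : ‖e i‖ ≤ 1 := by
  have hsum : ∑ j, ‖e j‖ ^ 2 = 1 := by
    apply RCLike.ofReal_injective (K := 𝕜)
    simpa [dotProduct, RCLike.star_def, RCLike.conj_mul] using he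
  have hi : ‖e i‖ ^ 2 ≤ 1 :=
    hsum ▸ Finset.single_le_sum (fun j _ => sq_nonneg ‖e j‖) (Finset.mem_univ i)
  nlinarith [norm_nonneg (e i)]

theorem norm_dotProduct_mulVec_le {A : Matrix m n 𝕜} {u : m → 𝕜} {v : n → 𝕜} {C : ℝ}
    (hA : ∀ i j, ‖A i j‖ ≤ C) (hu : ∀ i, ‖u i‖ ≤ 1) (hv : ∀ j, ‖v j‖ ≤ 1) :
    ‖u ⬝ᵥ (A *ᵥ v)‖ ≤ Fintype.card m * Fintype.card n * C := by
  have hterm : ∀ i j, ‖u i * (A i j * v j)‖ ≤ C := fun i j => by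
    rw [norm_mul, norm_mul]
    calc ‖u i‖ * (‖A i j‖ * ‖v j‖) ≤ 1 * (‖A i j‖ * 1) := by gcongr <;> simp [hu, hv]
      _ ≤ C := by simpa using hA i j
  calc ‖u ⬝ᵥ (A *ᵥ v)‖ = ‖∑ i, ∑ j, u i * (A i j * v j)‖ := by
        simp only [dotProduct, mulVec, Finset.mul_sum]
    _ ≤ ∑ i, ∑ j, ‖u i * (A i j * v j)‖ :=
        (norm_sum_le _ _).trans (Finset.sum_le_sum fun i _ => norm_sum_le _ _)
    _ ≤ ∑ _i : m, ∑ _j : n, C :=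
        Finset.sum_le_sum fun i _ => Finset.sum_le_sum fun j _ => hterm i j
    _ = Fintype.card m * Fintype.card n * C := by simp [mul_assoc]

theorem star_dotProduct_mul_self_mulVec {S : Matrix m m 𝕜} {e : m → 𝕜} {μ : 𝕜}
    (heig : S *ᵥ e = μ • e) (he : star e ⬝ᵥ e = 1) : star e ⬝ᵥ ((S * S) *ᵥ e) = μ ^ 2 := by
  rw [← mulVec_mulVec, heig, mulVec_smul, heig, smul_smul, dotProduct_smul, he, smul_eq_mul,
    mul_one, sq]

theorem Matrix.IsHermitian.star_vecMul_of_mulVec_eq_smul {S : Matrix m m 𝕜} (hS : S.IsHermitian)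
    {e : m → 𝕜} {μ : ℝ} (heig : S *ᵥ e = (μ : 𝕜) • e) : star e ᵥ* S = (μ : 𝕜) • star e := by
  conv_lhs => rw [← hS.eq]
  rw [← star_mulVec, heig, star_smul, RCLike.star_def, RCLike.conj_ofReal]

/-- Hellmann–Feynman. -/
theorem hasDerivAt_eigenvalue {S : ℝ → Matrix m m 𝕜} {S' : Matrix m m 𝕜} {e : ℝ → m → 𝕜}
    {e' : m → 𝕜} {lam : ℝ → ℝ} {x : ℝ} (hS : ∀ i j, HasDerivAt (fun t => S t i j) (S' i j) x)
    (he : ∀ i, HasDerivAt (fun t => e t i) (e' i) x) (hherm : (S x).IsHermitian)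
    (heig : ∀ᶠ t in 𝓝 x, S t *ᵥ e t = (lam t : 𝕜) • e t)
    (hunit : ∀ᶠ t in 𝓝 x, star (e t) ⬝ᵥ e t = 1) :
    HasDerivAt (fun t => (lam t : 𝕜)) (star (e x) ⬝ᵥ (S' *ᵥ e x)) x := by
  have hstar : ∀ i, HasDerivAt (fun t => star (e t) i) (star e' i) x := fun i => (he i).star
  have hnorm : star e' ⬝ᵥ e x + star (e x) ⬝ᵥ e' = 0 :=
    (hasDerivAt_dotProduct hstar he).unique <|
      (hasDerivAt_const x (1 : 𝕜)).congr_of_eventuallyEq hunit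
  have hquad := hasDerivAt_dotProduct hstar (hasDerivAt_mulVec_apply hS he)
  have hlam : (fun t => (lam t : 𝕜)) =ᶠ[𝓝 x] fun t => star (e t) ⬝ᵥ (S t *ᵥ e t) := by
    filter_upwards [heig, hunit] with t ht hut
    rw [ht, dotProduct_smul, hut, smul_eq_mul, mul_one]
  refine (hquad.congr_of_eventuallyEq hlam).congr_deriv ?_
  rw [dotProduct_add, heig.self_of_nhds, dotProduct_mulVec (star (e x)) (S x),
    hherm.star_vecMul_of_mulVec_eq_smul heig.self_of_nhds]
  simp only [dotProduct_smul, smul_dotProduct, smul_eq_mul]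
  linear_combination (lam x : 𝕜) * hnorm

end Eigen

section Blowup

theorem tendsto_atTop_or_atBot_of_tendsto_abs {f : ℝ → ℝ} {b : ℝ}
    (hf : ∀ᶠ x in 𝓝[<] b, ContinuousAt f x) (habs : Tendsto (fun x => |f x|) (𝓝[<] b) atTop) :
    Tendsto f (𝓝[<] b) atTop ∨ Tendsto f (𝓝[<] b) atBot := by
  obtain ⟨c, hcb, hc⟩ := mem_nhdsLT_iff_exists_Ioo_subset.mp (hf.and (habs.eventually_gt_atTop 0))
  have hcont : ContinuousOn f (Ioo c b) := fun y hy => (hc hy).1.continuousWithinAt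
  have hsign : (∀ y ∈ Ioo c b, 0 < f y) ∨ ∀ y ∈ Ioo c b, f y < 0 := by
    by_contra! h
    obtain ⟨⟨y, hy, hfy⟩, z, hz, hfz⟩ := h
    obtain ⟨w, hw, hfw⟩ := isPreconnected_Ioo.intermediate_value hy hz hcont ⟨hfy, hfz⟩
    exact (abs_pos.mp (hc hw).2) hfw
  have hIoo : Ioo c b ∈ 𝓝[<] b := Ioo_mem_nhdsLT hcb
  rcases hsign with hpos | hneg
  · exact .inl <| habs.congr' <| eventually_of_mem hIoo fun y hy => abs_of_pos (hpos y hy)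
  · refine .inr <| (tendsto_neg_atTop_atBot.comp habs).congr' <|
      eventually_of_mem hIoo fun y hy => ?_
    simp [abs_of_neg (hneg y hy)]

theorem not_tendsto_atBot_of_monotoneOn {f : ℝ → ℝ} {c b : ℝ} (hcb : c < b)
    (hf : MonotoneOn f (Ioo c b)) : ¬Tendsto f (𝓝[<] b) atBot := by
  intro hbot
  obtain ⟨x₀, hcx₀, hx₀b⟩ := exists_between hcb
  have hge : ∀ᶠ y in 𝓝[<] b, f x₀ ≤ f y := eventually_of_mem (Ioo_mem_nhdsLT hx₀b)
    fun y hy => hf ⟨hcx₀, hx₀b⟩ ⟨hcx₀.trans hy.1, hy.2⟩ hy.1.le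
  obtain ⟨y, hge, hlt⟩ := (hge.and (hbot.eventually_lt_atBot (f x₀))).exists
  exact hlt.not_ge hge

theorem tendsto_atTop_of_tendsto_abs_of_sq_sub_le_deriv {f f' : ℝ → ℝ} {b B : ℝ}
    (hf : ∀ᶠ x in 𝓝[<] b, HasDerivAt f (f' x) x) (hf' : ∀ᶠ x in 𝓝[<] b, f x ^ 2 - B ≤ f' x)
    (habs : Tendsto (fun x => |f x|) (𝓝[<] b) atTop) : Tendsto f (𝓝[<] b) atTop := by
  refine (tendsto_atTop_or_atBot_of_tendsto_abs (hf.mono fun x hx => hx.continuousAt)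
    habs).resolve_right ?_
  have hpos : ∀ᶠ x in 𝓝[<] b, HasDerivAt f (f' x) x ∧ 0 < f' x := by
    filter_upwards [hf, hf', habs.eventually_gt_atTop (|B| + 1)] with x hx hx' hbig
    refine ⟨hx, ?_⟩
    nlinarith [sq_abs (f x), le_abs_self B]
  obtain ⟨c, hcb, hc⟩ := mem_nhdsLT_iff_exists_Ioo_subset.mp hpos
  refine not_tendsto_atBot_of_monotoneOn hcb (StrictMonoOn.monotoneOn ?_)
  refine strictMonoOn_of_deriv_pos (convex_Ioo c b)
    (fun y hy => (hc hy).1.continuousAt.continuousWithinAt) fun y hy => ?_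
  rw [interior_Ioo] at hy
  rw [(hc hy).1.deriv]
  exact (hc hy).2

end Blowup

theorem eigenvalue_riccati_blowup_general (n : ℕ) (xm xp : ℝ) (hxx : xm < xp)
    (V S S' : ℝ → Matrix (Fin n) (Fin n) ℂ)
    (hVbdd : ∃ C : ℝ, ∀ x i j, ‖V x i j‖ ≤ C)
    (hSherm : ∀ x ∈ Set.Ioo xm xp, (S x).IsHermitian)
    (hSd : ∀ i j, ∀ x ∈ Set.Ioo xm xp, HasDerivAt (fun t => S t i j) (S' x i j) x)
    (heq : ∀ x ∈ Set.Ioo xm xp, S' x = S x * S x - V x)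
    (lam lam' : ℝ → ℝ) (e e' : ℝ → Fin n → ℂ)
    (heig : ∀ x ∈ Set.Ioo xm xp, S x *ᵥ e x = (lam x : ℂ) • e x)
    (hunit : ∀ x ∈ Set.Ioo xm xp, star (e x) ⬝ᵥ e x = 1)
    (hed : ∀ i, ∀ x ∈ Set.Ioo xm xp, HasDerivAt (fun t => e t i) (e' x i) x)
    (hld : ∀ x ∈ Set.Ioo xm xp, HasDerivAt lam (lam' x) x) :
    (∀ x ∈ Set.Ioo xm xp, lam' x = lam x ^ 2 - (star (e x) ⬝ᵥ (V x *ᵥ e x)).re) ∧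
    (Filter.Tendsto (fun x => |lam x|) (nhdsWithin xp (Set.Iio xp)) Filter.atTop →
      Filter.Tendsto lam (nhdsWithin xp (Set.Iio xp)) Filter.atTop) := by
  have hriccati : ∀ x ∈ Ioo xm xp, lam' x = lam x ^ 2 - (star (e x) ⬝ᵥ (V x *ᵥ e x)).re := by
    intro x hx
    have hnhds : Ioo xm xp ∈ 𝓝 x := isOpen_Ioo.mem_nhds hx
    have hderiv := (hld x hx).ofReal_comp.unique <| hasDerivAt_eigenvalue (hSd · · x hx)
      (hed · x hx) (hSherm x hx) (eventually_of_mem hnhds heig) (eventually_of_mem hnhds hunit)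
    rw [heq x hx, sub_mulVec, dotProduct_sub,
      star_dotProduct_mul_self_mulVec (heig x hx) (hunit x hx)] at hderiv
    simpa [← Complex.ofReal_pow] using congrArg Complex.re hderiv
  refine ⟨hriccati, fun habs => ?_⟩
  obtain ⟨C, hC⟩ := hVbdd
  have hIoo : Ioo xm xp ∈ 𝓝[<] xp := Ioo_mem_nhdsLT hxx
  refine tendsto_atTop_of_tendsto_abs_of_sq_sub_le_deriv (B := n * n * C)
    (eventually_of_mem hIoo hld) (eventually_of_mem hIoo fun x hx => ?_) habs
  have hentry := norm_apply_le_one_of_star_dotProduct_self_eq_one (hunit x hx)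
  have hbound := norm_dotProduct_mulVec_le (u := star (e x)) (hC x)
    (fun i => (norm_star (e x i)).trans_le (hentry i)) hentry
  rw [Fintype.card_fin] at hbound
  rw [hriccati x hx]
  linarith [Complex.re_le_norm (star (e x) ⬝ᵥ (V x *ᵥ e x))]

/-- Lemma 2: an eigenvalue `lam` of a Hermitian Riccati solution `S' = S² - V`
with unit eigenvector `e` obeys `lam' = lam² - e†Ve`; consequently a divergent eigenvalue
diverges to `+∞` as `x → x₊⁻`. -/
theorem eigenvalue_riccati_blowup (n : ℕ) (xm xp : ℝ) (hxx : xm < xp)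
    (V S S' : ℝ → Matrix (Fin n) (Fin n) ℂ)
    (hV : ∀ x, (V x).IsHermitian)
    (hVbdd : ∃ C : ℝ, ∀ x i j, ‖V x i j‖ ≤ C)
    (hSherm : ∀ x ∈ Set.Ioo xm xp, (S x).IsHermitian)
    (hSd : ∀ i j, ∀ x ∈ Set.Ioo xm xp, HasDerivAt (fun t => S t i j) (S' x i j) x)
    (heq : ∀ x ∈ Set.Ioo xm xp, S' x = S x * S x - V x)
    (lam lam' : ℝ → ℝ) (e e' : ℝ → Fin n → ℂ)
    (heig : ∀ x ∈ Set.Ioo xm xp, S x *ᵥ e x = (lam x : ℂ) • e x)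
    (hunit : ∀ x ∈ Set.Ioo xm xp, star (e x) ⬝ᵥ e x = 1)
    (hed : ∀ i, ∀ x ∈ Set.Ioo xm xp, HasDerivAt (fun t => e t i) (e' x i) x)
    (hld : ∀ x ∈ Set.Ioo xm xp, HasDerivAt lam (lam' x) x) :
    (∀ x ∈ Set.Ioo xm xp, lam' x = lam x ^ 2 - (star (e x) ⬝ᵥ (V x *ᵥ e x)).re) ∧
    (Filter.Tendsto (fun x => |lam x|) (nhdsWithin xp (Set.Iio xp)) Filter.atTop →
      Filter.Tendsto lam (nhdsWithin xp (Set.Iio xp)) Filter.atTop) :=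
  eigenvalue_riccati_blowup_general n xm xp hxx V S S' hVbdd hSherm hSd heq lam lam' e e' heig hunit
    hed hld
end

section
/- Let V be a positive-definite Hermitian-matrix-valued continuous bounded function on ℝ, and let S be a Hermitian solution of V + S' - S² = 0 with S(a) = 0 at some point a. Then every eigenvalue λ of S, satisfying λ' = λ² - e†Ve with e the corresponding unit eigenvector and e†Ve > 0, remains bounded above and below for all x; hence S is bounded everywhere. -/
/-!
Along the eigenvalue path `λ' = λ² - q`, where `q = e†Ve ≤ n² · sup |V_ij| =: M` because `e` is a
unit vector. A global solution of such a Riccati equation satisfies `|λ| ≤ √M`: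
once `λ` exceeds `c > √M` it stays above `c` (where `λ = c` the slope is positive), and then
`λ' ≥ δ λ²` for some `δ > 0`, so `-1/λ` grows at least linearly and `λ` blows up in finite time.
The lower bound is the upper bound for the reflected solution `x ↦ -λ(-x)` of the same kind of
equation.
-/

open Matrix Set
open scoped ComplexOrder

theorem norm_apply_le_one_of_star_dotProduct_self_eq_one_s18 {ι : Type*} [Fintype ι]
    {v : ι → ℂ} (hv : star v ⬝ᵥ v = 1) (i : ι) : ‖v i‖ ≤ 1 := by
  have hsum : ∑ j, ‖v j‖ ^ 2 = 1 := by
    simpa [dotProduct, Complex.conj_mul', ← Complex.ofReal_pow] using congrArg Complex.re hv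
  have hi : ‖v i‖ ^ 2 ≤ 1 :=
    hsum ▸ Finset.single_le_sum (f := fun j => ‖v j‖ ^ 2) (fun j _ => by positivity)
      (Finset.mem_univ i)
  exact (sq_le_one_iff₀ (norm_nonneg _)).mp hi

theorem norm_star_dotProduct_mulVec_le {n : ℕ} {A : Matrix (Fin n) (Fin n) ℂ} {C : ℝ}
    (hA : ∀ i j, ‖A i j‖ ≤ C) {v : Fin n → ℂ} (hv : star v ⬝ᵥ v = 1) :
    ‖star v ⬝ᵥ (A *ᵥ v)‖ ≤ n ^ 2 * C := by
  have hv1 := norm_apply_le_one_of_star_dotProduct_self_eq_one_s18 hv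
  have hterm : ∀ i j, ‖star (v i) * (A i j * v j)‖ ≤ C := fun i j => by
    rw [norm_mul, norm_mul, norm_star]
    calc ‖v i‖ * (‖A i j‖ * ‖v j‖) ≤ 1 * (‖A i j‖ * 1) := by gcongr <;> simp [hv1]
      _ ≤ C := by simpa using hA i j
  calc ‖star v ⬝ᵥ (A *ᵥ v)‖ = ‖∑ i, ∑ j, star (v i) * (A i j * v j)‖ := by
        simp only [dotProduct, mulVec, Pi.star_apply, Finset.mul_sum]
    _ ≤ ∑ i, ∑ j, ‖star (v i) * (A i j * v j)‖ :=
        (norm_sum_le _ _).trans (Finset.sum_le_sum fun i _ => norm_sum_le _ _)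
    _ ≤ ∑ _i : Fin n, ∑ _j : Fin n, C :=
        Finset.sum_le_sum fun i _ => Finset.sum_le_sum fun j _ => hterm i j
    _ = n ^ 2 * C := by simp; ring

theorem false_of_hasDerivAt_ge_mul_sq {f f' : ℝ → ℝ} {δ x₀ : ℝ} (hδ : 0 < δ)
    (hf : ∀ x, x₀ ≤ x → HasDerivAt f (f' x) x) (hpos : ∀ x, x₀ ≤ x → 0 < f x)
    (hf' : ∀ x, x₀ ≤ x → δ * f x ^ 2 ≤ f' x) : False := by
  let F : ℝ → ℝ := fun y => -(f y)⁻¹ - δ * y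
  have hF : ∀ x ∈ Ici x₀, HasDerivAt F (f' x / f x ^ 2 - δ) x := fun x hx => by
    have h : HasDerivAt F (-(-f' x / f x ^ 2) - δ * 1) x :=
      ((hf x hx).inv (hpos x hx).ne').neg.sub ((hasDerivAt_id x).const_mul δ)
    convert h using 1
    ring
  have hFmono : MonotoneOn F (Ici x₀) := by
    refine monotoneOn_of_hasDerivWithinAt_nonneg (convex_Ici x₀)
      (fun x hx => (hF x hx).continuousAt.continuousWithinAt)
      (fun x hx => (hF x (interior_subset hx)).hasDerivWithinAt) fun x hx => ?_
    have hx : x₀ ≤ x := interior_subset (s := Ici x₀) hx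
    rw [sub_nonneg, le_div_iff₀ (pow_pos (hpos x hx) 2)]
    exact hf' x hx
  set y := x₀ + (f x₀)⁻¹ / δ
  have hy : x₀ ≤ y := le_add_of_nonneg_right (by have := hpos x₀ le_rfl; positivity)
  have hFy : F x₀ ≤ F y := hFmono self_mem_Ici hy hy
  have hinv : (f y)⁻¹ ≤ 0 := by
    simp only [F, y] at hFy
    have hδy : δ * ((f x₀)⁻¹ / δ) = (f x₀)⁻¹ := mul_div_cancel₀ _ hδ.ne'
    nlinarith
  exact (inv_pos.mpr (hpos y hy)).not_ge hinv

theorem le_of_hasDerivAt_eq_sq_sub {f q : ℝ → ℝ} {c x₀ : ℝ}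
    (hf : ∀ x, HasDerivAt f (f x ^ 2 - q x) x) (hq : ∀ x, q x < c ^ 2) (hx₀ : c ≤ f x₀)
    {x : ℝ} (hx : x₀ ≤ x) : c ≤ f x := by
  have := image_le_of_deriv_right_lt_deriv_boundary' (f := fun y => -f y) (a := x₀) (b := x)
    (f' := fun y => -(f y ^ 2 - q y)) (B := fun _ => -c) (B' := 0)
    (fun y _ => (hf y).continuousAt.neg.continuousWithinAt)
    (fun y _ => (hf y).neg.hasDerivWithinAt) (neg_le_neg hx₀) continuousOn_const
    (fun y _ => hasDerivWithinAt_const _ _ _)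
    (fun y _ hy => by rw [neg_inj.mp hy]; simpa using hq y) ⟨hx, le_rfl⟩
  simpa using this

theorem le_sqrt_of_hasDerivAt_eq_sq_sub {f q : ℝ → ℝ} {M : ℝ}
    (hf : ∀ x, HasDerivAt f (f x ^ 2 - q x) x) (hq : ∀ x, q x ≤ M) (x : ℝ) : f x ≤ √M := by
  by_contra! hx
  set c := (√M + f x) / 2
  have hc : 0 < c := by have := Real.sqrt_nonneg M; simp only [c]; linarith
  have hcx : c ≤ f x := by simp only [c]; linarith
  have hMc : M < c ^ 2 := (Real.sqrt_lt' hc).mp (by simp only [c]; linarith)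
  have habove : ∀ y, x ≤ y → c ≤ f y := fun y =>
    le_of_hasDerivAt_eq_sq_sub hf (fun y => (hq y).trans_lt hMc) hcx
  -- `M` may be negative, while the comparison `f² - q ≥ (1 - m/c²) f²` needs `m ≥ 0`
  set m := max M 0
  have hmc : m < c ^ 2 := max_lt hMc (by positivity)
  refine false_of_hasDerivAt_ge_mul_sq (δ := 1 - m / c ^ 2) (x₀ := x)
    (sub_pos.mpr ((div_lt_one (by positivity)).mpr hmc)) (fun y _ => hf y)
    (fun y hy => hc.trans_le (habove y hy)) fun y hy => ?_
  have hcy : c ^ 2 ≤ f y ^ 2 := pow_le_pow_left₀ hc.le (habove y hy) 2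
  have hm : m ≤ m / c ^ 2 * f y ^ 2 := by
    rw [div_mul_eq_mul_div, le_div_iff₀ (by positivity)]
    exact mul_le_mul_of_nonneg_left hcy (le_max_right _ _)
  linarith [hq y, le_max_left M 0]

theorem abs_le_sqrt_of_hasDerivAt_eq_sq_sub {f q : ℝ → ℝ} {M : ℝ}
    (hf : ∀ x, HasDerivAt f (f x ^ 2 - q x) x) (hq : ∀ x, q x ≤ M) (x : ℝ) : |f x| ≤ √M := by
  have hrefl : ∀ x, HasDerivAt (fun y => -f (-y)) ((-f (-x)) ^ 2 - q (-x)) x := fun x => by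
    have h : HasDerivAt (fun y => -f (-y)) (-((f (-x) ^ 2 - q (-x)) * -1)) x :=
      ((hf (-x)).comp x (hasDerivAt_neg x)).neg
    convert h using 1
    ring
  refine abs_le.mpr ⟨?_, le_sqrt_of_hasDerivAt_eq_sq_sub hf hq x⟩
  have := le_sqrt_of_hasDerivAt_eq_sq_sub hrefl (fun x => hq (-x)) (-x)
  simp only [neg_neg] at this
  linarith

theorem eigenvalue_bounded_for_posdef_potential_general (n : ℕ)
    (V : ℝ → Matrix (Fin n) (Fin n) ℂ)
    (hVbdd : ∃ C : ℝ, ∀ x i j, ‖V x i j‖ ≤ C)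
    (lam lam' : ℝ → ℝ) (e : ℝ → Fin n → ℂ)
    (hunit : ∀ x : ℝ, star (e x) ⬝ᵥ e x = 1)
    (hld : ∀ x : ℝ, HasDerivAt lam (lam' x) x)
    (hleq : ∀ x : ℝ, lam' x = lam x ^ 2 - (star (e x) ⬝ᵥ (V x *ᵥ e x)).re) :
    ∃ c C : ℝ, ∀ x : ℝ, c ≤ lam x ∧ lam x ≤ C := by
  obtain ⟨C, hC⟩ := hVbdd
  have hq : ∀ x, (star (e x) ⬝ᵥ (V x *ᵥ e x)).re ≤ n ^ 2 * C := fun x =>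
    (Complex.re_le_norm _).trans (norm_star_dotProduct_mulVec_le (hC x) (hunit x))
  have hbound := abs_le_sqrt_of_hasDerivAt_eq_sq_sub (fun x => hleq x ▸ hld x) hq
  exact ⟨-√(n ^ 2 * C), √(n ^ 2 * C), fun x => abs_le.mp (hbound x)⟩

/-- Appendix E: for positive definite bounded Hermitian `V`, a Hermitian
Riccati solution `S` of `V + S' - S² = 0` vanishing at a point has all its eigenvalue
paths `lam` (obeying `lam' = lam² - e†Ve` with `e†Ve > 0`) bounded above and below. -/
theorem eigenvalue_bounded_for_posdef_potential (n : ℕ) (a : ℝ)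
    (V S S' : ℝ → Matrix (Fin n) (Fin n) ℂ)
    (hVpos : ∀ x, (V x).PosDef)
    (hVc : ∀ i j, Continuous fun t => V t i j)
    (hVbdd : ∃ C : ℝ, ∀ x i j, ‖V x i j‖ ≤ C)
    (hSherm : ∀ x, (S x).IsHermitian)
    (hSd : ∀ i j, ∀ x : ℝ, HasDerivAt (fun t => S t i j) (S' x i j) x)
    (heq : ∀ x : ℝ, V x + S' x - S x * S x = 0)
    (hSa : S a = 0)
    (lam lam' : ℝ → ℝ) (e : ℝ → Fin n → ℂ)
    (heig : ∀ x : ℝ, S x *ᵥ e x = (lam x : ℂ) • e x)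
    (hunit : ∀ x : ℝ, star (e x) ⬝ᵥ e x = 1)
    (hld : ∀ x : ℝ, HasDerivAt lam (lam' x) x)
    (hleq : ∀ x : ℝ, lam' x = lam x ^ 2 - (star (e x) ⬝ᵥ (V x *ᵥ e x)).re)
    (hpos : ∀ x : ℝ, 0 < (star (e x) ⬝ᵥ (V x *ᵥ e x)).re) :
    ∃ c C : ℝ, ∀ x : ℝ, c ≤ lam x ∧ lam x ≤ C :=
  eigenvalue_bounded_for_posdef_potential_general n V hVbdd lam lam' e hunit hld hleq
end
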